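/- Let ρ' be any 2×2 density matrix. Then there exist two incoherent 2×2 complex matrices K₀ and K₁ with K₀† K₀ + K₁† K₁ = I such that K₀ |+⟩⟨+| K₀† + K₁ |+⟩⟨+| K₁† = ρ', where |+⟩ = (|0⟩ + |1⟩)/√2. That is, the maximally coherent qubit state can be deterministically transformed into every qubit state by an incoherent operation with two Kraus operators. -/

import Mathlib

/-!
Write `ρ' = !![p, z; conj z, 1 - p]`; positivity of `ρ'` is the determinant condition
`‖z‖² ≤ p (1 - p)`. A diagonal Kraus operator `!![a, 0; 0, b]` together with an antidiagonal one
`!![0, c; d, 0]` sends `|+⟩⟨+|` to `½ (v v† + w w†)` with `v = (a, b)`, `w = (c, d)`, and is trace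
preserving when `‖a‖² + ‖d‖² = ‖b‖² + ‖c‖² = 1`. The choice `a = √p`, `d = √(1 - p)`,
`b = √(1 - p) conj v`, `c = √p u` with `‖u‖ = ‖v‖ = 1` fixes all norms, and the off-diagonal entry
becomes `½ √(p (1 - p)) (u + v)`. Since `‖z‖ ≤ √(p (1 - p))`, it equals `z` for suitable `u, v`,
because every complex number of modulus at most `2` is a sum of two complex numbers of modulus `1`.
-/

open Matrix
open scoped ComplexOrder

def Incoherent (K : Matrix (Fin 2) (Fin 2) ℂ) : Prop :=
  ∀ j i i' : Fin 2, K i j ≠ 0 → K i' j ≠ 0 → i = i'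

/-- The maximally coherent qubit state `|+⟩⟨+|` with `|+⟩ = (|0⟩ + |1⟩)/√2`. -/
noncomputable def maxCoherent : Matrix (Fin 2) (Fin 2) ℂ :=
  (1 / 2 : ℂ) • !![1, 1; 1, 1]

open ComplexConjugate

theorem Complex.exists_norm_eq_one_add_eq {ζ : ℂ} (hζ : ‖ζ‖ ≤ 2) :
    ∃ u v : ℂ, ‖u‖ = 1 ∧ ‖v‖ = 1 ∧ u + v = ζ := by
  obtain ⟨r, hr⟩ : ∃ r : ℝ, ‖ζ‖ = 2 * r := ⟨‖ζ‖ / 2, by ring⟩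
  have hr1 : r ^ 2 ≤ 1 := by nlinarith [norm_nonneg ζ]
  set t := √(1 - r ^ 2)
  have hnorm (y : ℝ) (hy : y ^ 2 = t ^ 2) : ‖exp (arg ζ * I) * (r + y * I)‖ = 1 := by
    rw [norm_mul, norm_exp_ofReal_mul_I, norm_add_mul_I, hy, Real.sq_sqrt (by linarith)]
    simp
  refine ⟨_, _, hnorm t rfl, hnorm (-t) (neg_sq t), ?_⟩
  calc exp (arg ζ * I) * (r + t * I) + exp (arg ζ * I) * (r + ↑(-t) * I)
      = ‖ζ‖ * exp (arg ζ * I) := by rw [hr]; push_cast; ring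
    _ = ζ := norm_mul_exp_arg_mul_I ζ

theorem Complex.exists_norm_eq_one_mul_add_eq {s : ℝ} {z : ℂ} (hz : ‖z‖ ≤ s) :
    ∃ u v : ℂ, ‖u‖ = 1 ∧ ‖v‖ = 1 ∧ s * (u + v) = 2 * z := by
  rcases (norm_nonneg z).trans hz |>.eq_or_lt with rfl | hs
  · exact ⟨1, -1, by simp, by simp, by simp [norm_le_zero_iff.mp hz]⟩
  · obtain ⟨u, v, hu, hv, huv⟩ := exists_norm_eq_one_add_eq (ζ := 2 * z / s) <| by
      rw [norm_div, norm_mul, norm_real, Real.norm_of_nonneg hs.le, div_le_iff₀ hs]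
      norm_num
      linarith
    refine ⟨u, v, hu, hv, ?_⟩
    rw [huv]
    field_simp

theorem Matrix.IsHermitian.apply_self_eq_re {n : Type*} {A : Matrix n n ℂ} (hA : A.IsHermitian)
    (i : n) : A i i = (A i i).re :=
  (Complex.conj_eq_iff_re.mp (hA.apply i i)).symm

theorem Matrix.PosSemidef.norm_apply_zero_one_sq_le {A : Matrix (Fin 2) (Fin 2) ℂ}
    (hA : A.PosSemidef) : ‖A 0 1‖ ^ 2 ≤ (A 0 0).re * (A 1 1).re := by
  have hdet := hA.det_nonneg
  rw [det_fin_two, ← hA.isHermitian.apply 0 1, hA.isHermitian.apply_self_eq_re 0,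
    hA.isHermitian.apply_self_eq_re 1, Complex.star_def, Complex.conj_mul', sub_nonneg,
    ← Complex.ofReal_pow, ← Complex.ofReal_mul, Complex.real_le_real] at hdet
  rwa [← hA.isHermitian.apply 0 1, norm_star]

theorem Matrix.PosSemidef.exists_eq_of_trace_eq_one {ρ : Matrix (Fin 2) (Fin 2) ℂ}
    (hρ : ρ.PosSemidef) (htr : ρ.trace = 1) :
    ∃ (p : ℝ) (z : ℂ), 0 ≤ p ∧ p ≤ 1 ∧ ‖z‖ ≤ √p * √(1 - p) ∧
      ρ = !![(p : ℂ), z; conj z, 1 - p] := by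
  set p := (ρ 0 0).re
  have h00 : ρ 0 0 = p := hρ.isHermitian.apply_self_eq_re 0
  have h11 : ρ 1 1 = 1 - p := by
    rw [trace_fin_two] at htr
    linear_combination htr - h00
  have hp0 : 0 ≤ p := (Complex.nonneg_iff.mp hρ.diag_nonneg).1
  have hp1 : 0 ≤ 1 - p := by
    simpa [h11] using (Complex.nonneg_iff.mp (hρ.diag_nonneg (i := 1))).1
  refine ⟨p, ρ 0 1, hp0, by linarith, ?_, ?_⟩
  · rw [← Real.sqrt_mul hp0, Real.le_sqrt (norm_nonneg _) (mul_nonneg hp0 hp1)]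
    simpa [h11] using hρ.norm_apply_zero_one_sq_le
  · conv_lhs => rw [eta_fin_two ρ, h00, h11, ← hρ.isHermitian.apply 1 0, Complex.star_def]

theorem incoherent_diag (a b : ℂ) : Incoherent !![a, 0; 0, b] := by
  intro j i i' h h'
  fin_cases j <;> fin_cases i <;> fin_cases i' <;> simp_all

theorem incoherent_antidiag (c d : ℂ) : Incoherent !![0, c; d, 0] := by
  intro j i i' h h'
  fin_cases j <;> fin_cases i <;> fin_cases i' <;> simp_all

section DiagAntidiag

variable {a b c d : ℂ}

theorem diag_antidiag_conjTranspose_mul_self_add_eq_one (had : ‖a‖ ^ 2 + ‖d‖ ^ 2 = 1)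
    (hbc : ‖b‖ ^ 2 + ‖c‖ ^ 2 = 1) :
    !![a, 0; 0, b]ᴴ * !![a, 0; 0, b] + !![0, c; d, 0]ᴴ * !![0, c; d, 0] = 1 := by
  ext i j
  fin_cases i <;> fin_cases j <;> simp [mul_apply, Complex.conj_mul']
  exacts [mod_cast had, mod_cast hbc]

theorem diag_antidiag_mul_maxCoherent_mul_conjTranspose_add :
    !![a, 0; 0, b] * maxCoherent * !![a, 0; 0, b]ᴴ + !![0, c; d, 0] * maxCoherent * !![0, c; d, 0]ᴴ
      = (1 / 2 : ℂ) • !![((‖a‖ ^ 2 + ‖c‖ ^ 2 : ℝ) : ℂ), a * conj b + c * conj d;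
          conj (a * conj b + c * conj d), ((‖b‖ ^ 2 + ‖d‖ ^ 2 : ℝ) : ℂ)] := by
  ext i j
  fin_cases i <;> fin_cases j <;>
    simp [maxCoherent, vecMul, dotProduct, Fin.sum_univ_two, ← Complex.mul_conj'] <;> ring

end DiagAntidiag

/-- The maximally coherent qubit state can be deterministically transformed into
every qubit state by an incoherent operation with two Kraus operators. -/
theorem max_coherent_reaches_all (ρ' : Matrix (Fin 2) (Fin 2) ℂ)
    (hρ' : ρ'.PosSemidef) (htr : ρ'.trace = 1) :
    ∃ K₀ K₁ : Matrix (Fin 2) (Fin 2) ℂ,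
      Incoherent K₀ ∧ Incoherent K₁ ∧ K₀ᴴ * K₀ + K₁ᴴ * K₁ = 1 ∧
      K₀ * maxCoherent * K₀ᴴ + K₁ * maxCoherent * K₁ᴴ = ρ' := by
  obtain ⟨p, z, hp0, hp1, hz, rfl⟩ := hρ'.exists_eq_of_trace_eq_one htr
  obtain ⟨u, v, hu, hv, huv⟩ := Complex.exists_norm_eq_one_mul_add_eq hz
  have ha : ‖(√p : ℂ)‖ ^ 2 = p := by simp [Real.sq_sqrt hp0]
  have hd : ‖(√(1 - p) : ℂ)‖ ^ 2 = 1 - p := by simp [Real.sq_sqrt (sub_nonneg.mpr hp1)]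
  have hb : ‖(√(1 - p) : ℂ) * conj v‖ ^ 2 = 1 - p := by
    rw [norm_mul, mul_pow, hd, RCLike.norm_conj, hv, one_pow, mul_one]
  have hc : ‖(√p : ℂ) * u‖ ^ 2 = p := by rw [norm_mul, mul_pow, ha, hu, one_pow, mul_one]
  have hoff : (√p : ℂ) * conj (√(1 - p) * conj v) + √p * u * conj (√(1 - p) : ℂ) = 2 * z := by
    simp only [map_mul, Complex.conj_conj, Complex.conj_ofReal, ← huv]
    push_cast; ring
  refine ⟨!![(√p : ℂ), 0; 0, √(1 - p) * conj v], !![0, √p * u; (√(1 - p) : ℂ), 0],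
    incoherent_diag _ _, incoherent_antidiag _ _,
    diag_antidiag_conjTranspose_mul_self_add_eq_one (by rw [ha, hd]; ring) (by rw [hb, hc]; ring),
    ?_⟩
  rw [diag_antidiag_mul_maxCoherent_mul_conjTranspose_add, hoff, ha, hb, hc, hd]
  ext i j
  fin_cases i <;> fin_cases j <;> simp [map_ofNat] <;> ring
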